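/- arXiv:2305.12803 — 2 statements merged into one kernel-verified Lean document; each statement's English description precedes it below -/
import Mathlib

section
/- For every family ℱ of (M,N)-stable sets there exists a single (M,N)-stable set I ⊆ ⋃ℱ with ⋃ℱ ⊆ span_M(I). -/
open Set Matroid
open scoped symmDiff

namespace AZ

variable {α : Type*}

/-- The contraction `M / X`, defined (in the standard way) as the dual of the
restriction of the dual to the complement of `X`. -/
def con (M : Matroid α) (X : Set α) : Matroid α := (M✶ ↾ (M.E \ X))✶

/-- The deletion `M − X := M ↾ (E ∖ X)`. -/
def del (M : Matroid α) (X : Set α) : Matroid α := M ↾ (M.E \ X)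

/-- The matroidal Hall condition `Hall(M,N)`: for every `X ⊆ E` such that `M ↾ X` has a
base that is independent in `N.X = N/(E∖X)`, also `N.X` has a base independent in `M ↾ X`. -/
def Hall (M N : Matroid α) : Prop :=
  ∀ X ⊆ N.E,
    (∃ B, (M ↾ X).IsBase B ∧ (con N (N.E \ X)).Indep B) →
    ∃ B, (con N (N.E \ X)).IsBase B ∧ (M ↾ X).Indep B

/-- `(M,N)` is finitely matchable: every finite `F ⊆ E` is `N`-spanned by an
`M`-independent set. -/
def FinitelyMatchable (M N : Matroid α) : Prop :=
  ∀ F ⊆ M.E, F.Finite → ∃ I, M.Indep I ∧ F ⊆ N.closure I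

/-- `G ⊆ E` is `(M,N)`-negligible: for all finite `X ⊆ G` and finite `Y ⊆ E ∖ G` there
is an `M/Y`-independent set that `N`-spans `X`. -/
def Negligible (M N : Matroid α) (G : Set α) : Prop :=
  G ⊆ M.E ∧
    ∀ X ⊆ G, X.Finite → ∀ Y ⊆ M.E \ G, Y.Finite →
      ∃ I, (con M Y).Indep I ∧ X ⊆ N.closure I

/-- A common independent set `I` of `M` and `N` is `(M,N)`-stable if every `J ⊆ E ∖ I`
that is independent in `M/I` and in `N` is also independent in `N/I`. -/
def Stable (M N : Matroid α) (I : Set α) : Prop :=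
  M.Indep I ∧ N.Indep I ∧
    ∀ J ⊆ M.E \ I, (con M I).Indep J → N.Indep J → (con N I).Indep J

/-- A circuit of a matroid: a minimal dependent subset of the ground set. -/
def Circuit (M : Matroid α) (C : Set α) : Prop :=
  C ⊆ M.E ∧ ¬ M.Indep C ∧ ∀ D ⊂ C, M.Indep D

/-- The arc relation of the exchange digraph `D(I)`: for `x ∈ E ∖ I` and `y ∈ I` there is
an arc `x → y` if `x ∈ span_M(I)` and `y` lies in the unique `M`-circuit contained in
`I + x`, and an arc `y → x` if `x ∈ span_N(I)` and `y` lies in the unique `N`-circuit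
contained in `I + x`. -/
def Arc (M N : Matroid α) (I : Set α) (x y : α) : Prop :=
  (x ∈ M.E \ I ∧ y ∈ I ∧ x ∈ M.closure I ∧
    ∃ C, Circuit M C ∧ C ⊆ insert x I ∧ x ∈ C ∧ y ∈ C) ∨
  (x ∈ I ∧ y ∈ M.E \ I ∧ y ∈ N.closure I ∧
    ∃ C, Circuit N C ∧ C ⊆ insert y I ∧ y ∈ C ∧ x ∈ C)

/-- `Reach M N I x` is `E(x,I)`: the set of elements reachable from `x` by a directed
path in `D(I)`. -/
def Reach (M N : Matroid α) (I : Set α) (x : α) : Set α :=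
  {y | Relation.ReflTransGen (Arc M N I) x y}

/-- `P = {f 0, …, f (2n)}` is an `xy`-augmenting path for `I`: it starts at
`x = f 0 ∉ span_N(I)`, ends at `y = f (2n) ∉ span_M(I)`, consecutive elements are joined
by arcs of `D(I)`, and there are no jumping arcs. -/
def IsAugPath (M N : Matroid α) (I P : Set α) (x y : α) : Prop :=
  ∃ (n : ℕ) (f : ℕ → α),
    P = f '' Set.Iic (2 * n) ∧ P ⊆ M.E ∧ Set.InjOn f (Set.Iic (2 * n)) ∧
    f 0 = x ∧ f (2 * n) = y ∧
    x ∉ N.closure I ∧ y ∉ M.closure I ∧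
    (∀ i < 2 * n, Arc M N I (f i) (f (i + 1))) ∧
    (∀ i j, i + 1 < j → j ≤ 2 * n → ¬ Arc M N I (f i) (f j))

/-- One augmentation step: `J = I △ P` for some augmenting path `P` for `I`. -/
def AugStep (M N : Matroid α) (I J : Set α) : Prop :=
  ∃ P x y, IsAugPath M N I P x y ∧ J = I ∆ P

/-- `J ∈ A(I)`: `J` is obtained from `I` by finitely many successive augmentations. -/
def MemA (M N : Matroid α) (I J : Set α) : Prop :=
  Relation.ReflTransGen (AugStep M N) I J

/-- `O = {f 0, …, f (2n+1)}` is a switching cycle for `I`: the arcs of `D(I)` inside `O`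
are exactly the arcs `f i → f (i+1 mod 2n+2)`, forming a chordless directed cycle. -/
def SwitchCycle (M N : Matroid α) (I O : Set α) : Prop :=
  ∃ (n : ℕ) (f : ℕ → α),
    O = f '' Set.Iio (2 * n + 2) ∧ O ⊆ M.E ∧ Set.InjOn f (Set.Iio (2 * n + 2)) ∧
    ∀ i < 2 * n + 2, ∀ j < 2 * n + 2,
      (Arc M N I (f i) (f j) ↔ j = (i + 1) % (2 * n + 2))

/-- The preorder on finite common independent sets: `I ⊴ J` iff
`I ⊆ span_M(J) ∩ span_N(J)`. -/
def Le (M N : Matroid α) (I J : Set α) : Prop :=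
  I ⊆ M.closure J ∩ N.closure J

/-- The equivalence relation: `I ∼ J` iff `I ⊴ J` and `J ⊴ I`. -/
def Sim (M N : Matroid α) (I J : Set α) : Prop :=
  Le M N I J ∧ Le M N J I

/-- A family of finite common independent sets of `M` and `N` that is closed under `∼`
and is `⊴`-directed. -/
def DirFam (M N : Matroid α) (D : Set (Set α)) : Prop :=
  (∀ I ∈ D, I.Finite ∧ M.Indep I ∧ N.Indep I) ∧
  (∀ I ∈ D, ∀ J, J.Finite → M.Indep J → N.Indep J → Sim M N I J → J ∈ D) ∧
  (∀ I ∈ D, ∀ J ∈ D, ∃ K ∈ D, Le M N I K ∧ Le M N J K)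

/-- A maximal directed family of finite common independent sets. -/
def MaxDirFam (M N : Matroid α) (D : Set (Set α)) : Prop :=
  DirFam M N D ∧ ∀ D', DirFam M N D' → D ⊆ D' → D' = D

/- By Zorn's lemma, take a maximal stable set `I ⊆ ⋃ℱ`; this is possible since
stability is a finitary condition and so passes to unions of chains. For `S ∈ ℱ`, extend `I` to
an `M`-basis `B` of `I ∪ S`. Any `L` that is independent in `M/B` is independent in `M/S`, because
`B` spans `S`; stability of `S` and then of `I` (applied to `L ∪ (B ∖ I)`) shows that `B` is
stable. By maximality `B = I`, so `I` spans `S`. -/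

lemma con_eq_contract (M : Matroid α) (X : Set α) : con M X = M ／ X := rfl

lemma stable_iff {M N : Matroid α} {I : Set α} :
    Stable M N I ↔ M.Indep I ∧ N.Indep I ∧
      ∀ J, Disjoint J I → M.Indep (J ∪ I) → N.Indep J → N.Indep (J ∪ I) := by
  refine and_congr_right fun hMI => and_congr_right fun hNI => ?_
  simp only [con_eq_contract, hMI.contract_indep_iff, hNI.contract_indep_iff, subset_sdiff]
  refine ⟨fun h J hJI hJ hNJ => (h J ⟨subset_union_left.trans hJ.subset_ground, hJI⟩
    ⟨hJI, hJ⟩ hNJ).2, fun h J hJ hMJ hNJ => ⟨hJ.2, h J hJ.2 hMJ.2 hNJ⟩⟩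

lemma Stable.indep_union {M N : Matroid α} {I J : Set α} (hI : Stable M N I)
    (hJI : Disjoint J I) (hMJ : M.Indep (J ∪ I)) (hNJ : N.Indep J) : N.Indep (J ∪ I) :=
  (stable_iff.1 hI).2.2 J hJI hMJ hNJ

lemma stable_empty (M N : Matroid α) : Stable M N ∅ :=
  stable_iff.2 ⟨M.empty_indep, N.empty_indep, fun J _ _ hNJ => by rwa [union_empty]⟩

lemma indep_union_sUnion_of_directedOn {M : Matroid α} [M.Finitary] {J : Set α}
    {c : Set (Set α)} (hne : c.Nonempty) (hc : DirectedOn (· ⊆ ·) c)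
    (h : ∀ I ∈ c, M.Indep (J ∪ I)) : M.Indep (J ∪ ⋃₀ c) := by
  refine indep_of_forall_finite_subset_indep _ fun D hD hDfin => ?_
  obtain ⟨I, hIc, hDI⟩ := hc.exists_mem_subset_of_finite_of_subset_sUnion hne
    (hDfin.sdiff : (D \ J).Finite) (sdiff_subset_iff.2 hD)
  exact (h I hIc).subset (sdiff_subset_iff.1 hDI)

lemma stable_sUnion_of_directedOn {M N : Matroid α} [M.Finitary] [N.Finitary]
    {c : Set (Set α)} (hne : c.Nonempty) (hc : DirectedOn (· ⊆ ·) c)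
    (h : ∀ I ∈ c, Stable M N I) : Stable M N (⋃₀ c) := by
  have hunion {K : Matroid α} [K.Finitary] (hK : ∀ I ∈ c, K.Indep I) : K.Indep (⋃₀ c) := by
    simpa using indep_union_sUnion_of_directedOn (J := ∅) hne hc (by simpa using hK)
  refine stable_iff.2 ⟨hunion fun I hI => (h I hI).1, hunion fun I hI => (h I hI).2.1,
    fun J hJ hMJ hNJ => indep_union_sUnion_of_directedOn hne hc fun I hI => ?_⟩
  have hIc : I ⊆ ⋃₀ c := subset_sUnion_of_mem hI
  exact (h I hI).indep_union (hJ.mono_right hIc)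
    (hMJ.subset (union_subset_union_right J hIc)) hNJ

lemma Stable.of_isBasis_union {M N : Matroid α} {I S B : Set α} (hI : Stable M N I)
    (hS : Stable M N S) (hB : M.IsBasis B (I ∪ S)) (hIB : I ⊆ B) : Stable M N B := by
  have hBI_S : B \ I ⊆ S := sdiff_subset_iff.2 hB.subset
  have hNB : N.Indep B := by
    simpa [sdiff_union_of_subset hIB] using hI.indep_union disjoint_sdiff_left
      (by rw [sdiff_union_of_subset hIB]; exact hB.indep) (hS.2.1.subset hBI_S)
  refine stable_iff.2 ⟨hB.indep, hNB, fun L hLB hMLB hNL => ?_⟩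
  have hLS : Disjoint L S := by
    refine disjoint_left.2 fun x hxL hxS => ?_
    have hxB : x ∉ B := disjoint_left.1 hLB hxL
    have hins : M.Indep (insert x B) := hMLB.subset (insert_subset (Or.inl hxL) subset_union_right)
    exact ((hB.indep.insert_indep_iff_of_notMem hxB).1 hins).2
      (hB.subset_closure (Or.inr hxS))
  -- `B` spans `I ∪ S`, so `L` is independent in `M / (I ∪ S) = M / S / I`, hence in `M / S`.
  have hMLS : M.Indep (L ∪ S) := by
    have hcon : (M ／ (I ∪ S)).Indep L := hB.contract_indep_iff.2
      ⟨hMLB, disjoint_union_left.2 ⟨(hLB.mono_right hIB).symm, hLS.symm⟩⟩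
    rw [union_comm, ← contract_contract] at hcon
    exact (hS.1.contract_indep_iff.1 hcon.of_contract).2
  have hNLS : N.Indep (L ∪ S) := hS.indep_union hLS hMLS hNL
  have hdisj : Disjoint (L ∪ B \ I) I :=
    disjoint_union_left.2 ⟨hLB.mono_right hIB, disjoint_sdiff_left⟩
  simpa [union_assoc, sdiff_union_of_subset hIB] using hI.indep_union hdisj
    (by rwa [union_assoc, sdiff_union_of_subset hIB])
    (hNLS.subset (union_subset_union_right L hBI_S))

theorem statement7_general (M N : Matroid α) [M.Finitary] [N.Finitary]
    (F : Set (Set α)) (hF : ∀ S ∈ F, Stable M N S) :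
    ∃ I, Stable M N I ∧ I ⊆ ⋃₀ F ∧ ⋃₀ F ⊆ M.closure I := by
  obtain ⟨I, -, hImax⟩ := zorn_subset_nonempty {I | Stable M N I ∧ I ⊆ ⋃₀ F}
    (fun c hcF hc hne => ⟨⋃₀ c,
      ⟨stable_sUnion_of_directedOn hne hc.directedOn fun I hI => (hcF hI).1,
        sUnion_subset fun I hI => (hcF hI).2⟩, fun _ => subset_sUnion_of_mem⟩)
    ∅ ⟨stable_empty M N, empty_subset _⟩
  obtain ⟨hI, hIF⟩ := hImax.prop
  refine ⟨I, hI, hIF, sUnion_subset fun S hSF => ?_⟩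
  have hS := hF S hSF
  obtain ⟨B, hB, hIB⟩ := hI.1.subset_isBasis_of_subset (subset_union_left (t := S))
    (union_subset hI.1.subset_ground hS.1.subset_ground)
  have hBF : B ⊆ ⋃₀ F := hB.subset.trans (union_subset hIF (subset_sUnion_of_mem hSF))
  have hIB_eq : I = B := hImax.eq_of_subset ⟨hI.of_isBasis_union hS hB hIB, hBF⟩ hIB
  rw [hIB_eq]
  exact subset_union_right.trans hB.subset_closure

/-- For every family `ℱ` of `(M,N)`-stable sets there is a single stable set
`I ⊆ ⋃ℱ` with `⋃ℱ ⊆ span_M(I)`. -/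
theorem statement7 (M N : Matroid α) [M.Finitary] [N.Finitary] (hE : M.E = N.E)
    (F : Set (Set α)) (hF : ∀ S ∈ F, Stable M N S) :
    ∃ I, Stable M N I ∧ I ⊆ ⋃₀ F ∧ ⋃₀ F ⊆ M.closure I :=
  statement7_general M N F hF

end AZ
end

section
/- For finite common independent sets I and J of M and N: I ∼ J if and only if there exist finite common independent sets I_0, …, I_n with I_0 = I, I_n = J such that for every i < n, I_{i+1} = I_i △ O_i for some switching cycle O_i for I_i. -/
open Set Matroid
open scoped symmDiff

namespace AZ

variable {α : Type*}

/-! Switching a chordless cycle `O` of `D(I)` is, in each of `M` and `N`, a simultaneous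
exchange in which the fundamental circuit of every entering element meets the leaving elements
only in its neighbour on `O`. Performing these exchanges one at a time shows that `I △ O` is
again a common independent set with the same `M`- and `N`-spans as `I`; this gives `⇐`.
Conversely, if `I` and `J` have the same spans then every element of `I △ J` has an arc of
`D(I)` into `I △ J`, so `I △ J` contains a cycle of `D(I)`; a shortest one is chordless, and
switching it makes `I △ J` smaller. -/

open Relation

theorem _root_.Relation.reflTransGen_iff_exists_seq {β : Type*} {r : β → β → Prop}
    {a b : β} :
    ReflTransGen r a b ↔
      ∃ (n : ℕ) (g : ℕ → β), g 0 = a ∧ g n = b ∧ ∀ i < n, r (g i) (g (i + 1)) := by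
  constructor
  · intro h
    induction h with
    | refl => exact ⟨0, fun _ => a, rfl, rfl, by simp⟩
    | @tail c d _ hcd ih =>
      obtain ⟨n, g, hg0, hgn, hg⟩ := ih
      refine ⟨n + 1, Function.update g (n + 1) d, by simp [hg0], by simp, fun i hi => ?_⟩
      rw [Function.update_of_ne (by omega)]
      rcases (Nat.lt_succ_iff.1 hi).lt_or_eq with hi | rfl
      · rw [Function.update_of_ne (by omega)]
        exact hg i hi
      · simpa [hgn] using hcd
  · rintro ⟨n, g, rfl, rfl, hg⟩
    induction n with
    | zero => exact .refl
    | succ n ih => exact (ih fun i hi => hg i (by omega)).tail (hg n (by omega))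

theorem _root_.Set.BijOn.image_sep {ι κ : Type*} {σ : ι → κ} {s : Set ι} {t : Set κ}
    (hσ : BijOn σ s t) {p : κ → Prop} {q : ι → Prop} (h : ∀ i ∈ s, p (σ i) ↔ q i) :
    σ '' {i ∈ s | q i} = {j ∈ t | p j} := by
  ext j
  constructor
  · rintro ⟨i, ⟨hi, hq⟩, rfl⟩
    exact ⟨hσ.mapsTo hi, (h i hi).2 hq⟩
  · rintro ⟨hj, hp⟩
    obtain ⟨i, hi, rfl⟩ := hσ.surjOn hj
    exact ⟨i, ⟨hi, (h i hi).1 hp⟩, rfl⟩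

theorem bijOn_add_one_mod {L : ℕ} (hL : 0 < L) :
    BijOn (fun i => (i + 1) % L) (Iio L) (Iio L) := by
  have hmaps : MapsTo (fun i => (i + 1) % L) (Iio L) (Iio L) := fun i _ => Nat.mod_lt _ hL
  refine ((finite_Iio L).injOn_iff_bijOn_of_mapsTo hmaps).1 fun i hi j hj hij => ?_
  exact Nat.ModEq.eq_of_lt_of_lt (Nat.ModEq.add_right_cancel' 1 hij) hi hj

theorem _root_.Matroid.Indep.diagonal_exchange {M : Matroid α} {I : Set α} (hI : M.Indep I)
    {ι : Type*} {s : Set ι} (hs : s.Finite) {x y : ι → α}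
    (hxI : ∀ i ∈ s, x i ∉ I) (hxcl : ∀ i ∈ s, x i ∈ M.closure I)
    (hyI : ∀ i ∈ s, y i ∈ I)
    (hxy : ∀ i ∈ s, ∀ j ∈ s, y j ∈ M.fundCircuit (x i) I ↔ i = j) :
    M.Indep (I \ y '' s ∪ x '' s) ∧ M.closure (I \ y '' s ∪ x '' s) = M.closure I := by
  refine Set.Finite.induction_on_subset (motive := fun t _ =>
    M.Indep (I \ y '' t ∪ x '' t) ∧ M.closure (I \ y '' t ∪ x '' t) = M.closure I) s hs
    (by simpa using hI) ?_
  intro a t has hts hat ⟨hI', hcl'⟩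
  set I' := I \ y '' t ∪ x '' t
  -- the fundamental circuit of `x a` avoids `y '' t`, so it survives the earlier exchanges
  have hC : M.fundCircuit (x a) I ⊆ insert (x a) I' := by
    intro z hz
    obtain rfl | hzI := M.fundCircuit_subset_insert (x a) I hz
    · exact mem_insert _ _
    refine .inr (.inl ⟨hzI, ?_⟩)
    rintro ⟨j, hj, rfl⟩
    exact hat ((hxy a has j (hts hj)).1 hz ▸ hj)
  have hya : y a ∈ M.fundCircuit (x a) I := (hxy a has a has).2 rfl
  have hyaI' : y a ∈ I' := by
    refine .inl ⟨hyI a has, ?_⟩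
    rintro ⟨j, hj, hja⟩
    exact hat ((hxy a has j (hts hj)).1 (hja ▸ hya) ▸ hj)
  have hyacl : y a ∈ M.closure (insert (x a) I' \ {y a}) :=
    M.closure_subset_closure (sdiff_subset_sdiff_left hC)
      ((hI.fundCircuit_isCircuit (hxcl a has) (hxI a has)).mem_closure_sdiff_singleton_of_mem hya)
  have hset : I \ y '' insert a t ∪ x '' insert a t = insert (x a) I' \ {y a} := by
    have hxya : x a ≠ y a := fun h => hxI a has (h ▸ hyI a has)
    have hyx : y a ∉ x '' t := by
      rintro ⟨j, hj, hja⟩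
      exact hxI j (hts hj) (hja ▸ hyI a has)
    ext z
    simp only [I', image_insert_eq, mem_union, mem_sdiff, mem_insert_iff, mem_singleton_iff]
    constructor
    · rintro (⟨hzI, hz⟩ | rfl | hz)
      · exact ⟨.inr (.inl ⟨hzI, fun h => hz (.inr h)⟩), fun h => hz (.inl h)⟩
      · exact ⟨.inl rfl, hxya⟩
      · exact ⟨.inr (.inr hz), fun h => hyx (h ▸ hz)⟩
    · rintro ⟨rfl | ⟨hzI, hz⟩ | hz, hzy⟩
      · exact .inr (.inl rfl)
      · exact .inl ⟨hzI, by tauto⟩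
      · exact .inr (.inr hz)
  rw [hset, ← hcl']
  have hxcl' : x a ∈ M.closure I' := hcl' ▸ hxcl a has
  exact ⟨hI'.indep_insert_sdiff_of_mem_closure hxcl' hyacl (.inr hyaI'),
    hI'.closure_insert_sdiff_eq_of_mem_closure hxcl' hyacl⟩

theorem circuit_iff_isCircuit {M : Matroid α} {C : Set α} : Circuit M C ↔ M.IsCircuit C := by
  rw [isCircuit_iff_forall_ssubset, Circuit, Dep]
  tauto

theorem exists_circuit_iff_mem_fundCircuit {M : Matroid α} {I : Set α} {x y : α}
    (hI : M.Indep I) (hxcl : x ∈ M.closure I) (hxI : x ∉ I) :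
    (∃ C, Circuit M C ∧ C ⊆ insert x I ∧ x ∈ C ∧ y ∈ C) ↔
      y ∈ M.fundCircuit x I := by
  refine ⟨fun ⟨C, hC, hCI, _, hyC⟩ => ?_, fun hy => ?_⟩
  · rwa [← (circuit_iff_isCircuit.1 hC).eq_fundCircuit_of_subset hI hCI]
  · exact ⟨_, circuit_iff_isCircuit.2 (hI.fundCircuit_isCircuit hxcl hxI),
      M.fundCircuit_subset_insert x I, M.mem_fundCircuit x I, hy⟩

theorem _root_.Matroid.Indep.mem_closure_sdiff_of_notMem_fundCircuit {M : Matroid α}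
    {I : Set α} {x y : α} (hI : M.Indep I) (hxcl : x ∈ M.closure I) (hxI : x ∉ I)
    (hy : y ∉ M.fundCircuit x I) : x ∈ M.closure (I \ {y}) := by
  have hsub : M.fundCircuit x I \ {x} ⊆ I \ {y} := fun z ⟨hzC, hzx⟩ =>
    ⟨(M.fundCircuit_subset_insert x I hzC).resolve_left hzx, fun hzy => hy (hzy ▸ hzC)⟩
  exact M.closure_subset_closure hsub
    ((hI.fundCircuit_isCircuit hxcl hxI).mem_closure_sdiff_singleton_of_mem (M.mem_fundCircuit x I))

section Arc

variable {M N : Matroid α} {I J : Set α} {x y : α}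

theorem arc_iff_of_notMem (hI : M.Indep I) (hxI : x ∉ I) :
    Arc M N I x y ↔ y ∈ I ∧ x ∈ M.closure I ∧ y ∈ M.fundCircuit x I := by
  simp only [Arc, hxI, false_and, or_false, mem_sdiff, not_false_eq_true, and_true]
  constructor
  · rintro ⟨-, hyI, hxcl, hC⟩
    exact ⟨hyI, hxcl, (exists_circuit_iff_mem_fundCircuit hI hxcl hxI).1 hC⟩
  · rintro ⟨hyI, hxcl, hy⟩
    exact ⟨M.mem_ground_of_mem_closure hxcl, hyI, hxcl,
      (exists_circuit_iff_mem_fundCircuit hI hxcl hxI).2 hy⟩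

theorem arc_iff_of_mem (hI : N.Indep I) (hyI : y ∈ I) :
    Arc M N I y x ↔ x ∈ M.E ∧ x ∉ I ∧ x ∈ N.closure I ∧ y ∈ N.fundCircuit x I := by
  simp only [Arc, hyI, not_true_eq_false, and_false, false_and, false_or, true_and, mem_sdiff]
  constructor
  · rintro ⟨⟨hxE, hxI⟩, hxcl, hC⟩
    exact ⟨hxE, hxI, hxcl, (exists_circuit_iff_mem_fundCircuit hI hxcl hxI).1 hC⟩
  · rintro ⟨hxE, hxI, hxcl, hy⟩
    exact ⟨⟨hxE, hxI⟩, hxcl, (exists_circuit_iff_mem_fundCircuit hI hxcl hxI).2 hy⟩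

theorem Arc.mem_iff_notMem (h : Arc M N I x y) : y ∈ I ↔ x ∉ I := by
  rcases h with ⟨⟨-, hxI⟩, hyI, -⟩ | ⟨hxI, ⟨-, hyI⟩, -⟩ <;> tauto

theorem exists_arc_of_closure_eq (hIM : M.Indep I) (hIN : N.Indep I) (hJM : M.Indep J)
    (hJN : N.Indep J) (hM : M.closure I = M.closure J) (hN : N.closure I = N.closure J)
    (hx : x ∈ I ∆ J) : ∃ y ∈ I ∆ J, Arc M N I x y := by
  rcases hx with ⟨hxI, hxJ⟩ | ⟨hxJ, hxI⟩
  · by_contra! hno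
    have hJ : J ⊆ N.closure (I \ {x}) := by
      intro z hzJ
      by_cases hzI : z ∈ I
      · exact N.subset_closure _ (sdiff_subset.trans hIN.subset_ground)
          ⟨hzI, fun h => hxJ (h ▸ hzJ)⟩
      have hzcl : z ∈ N.closure I := hN ▸ N.subset_closure J hJN.subset_ground hzJ
      refine hIN.mem_closure_sdiff_of_notMem_fundCircuit hzcl hzI fun hx => ?_
      exact hno z (.inr ⟨hzJ, hzI⟩)
        ((arc_iff_of_mem hIN hxI).2 ⟨hJM.subset_ground hzJ, hzI, hzcl, hx⟩)
    refine hIN.notMem_closure_sdiff_of_mem hxI ?_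
    exact N.closure_subset_closure_of_subset_closure hJ
      (hN ▸ N.subset_closure I hIN.subset_ground hxI)
  · have hxcl : x ∈ M.closure I := hM ▸ M.subset_closure J hJM.subset_ground hxJ
    have hC := hIM.fundCircuit_isCircuit hxcl hxI
    obtain ⟨y, hyC, hyJ⟩ := not_subset.1 fun h => hC.not_indep (hJM.subset h)
    have hyI : y ∈ I := (M.fundCircuit_subset_insert x I hyC).resolve_left
      fun h => hyJ (h ▸ hxJ)
    exact ⟨y, .inl ⟨hyI, hyJ⟩, (arc_iff_of_notMem hIM hxI).2 ⟨hyI, hxcl, hyC⟩⟩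

end Arc

section Cycle

variable {β : Type*} {r : β → β → Prop} {S : Set β}

def IsCycleIn (r : β → β → Prop) (S : Set β) (L : ℕ) (f : ℕ → β) : Prop :=
  MapsTo f (Iio L) S ∧ InjOn f (Iio L) ∧ ∀ i < L, r (f i) (f ((i + 1) % L))

theorem exists_isCycleIn (hS : S.Finite) (hne : S.Nonempty)
    (hout : ∀ v ∈ S, ∃ w ∈ S, r v w) :
    ∃ L, 0 < L ∧ ∃ f, IsCycleIn r S L f := by
  obtain ⟨v, hv⟩ := hne
  choose! next hnextS hnext using hout
  have hmaps : ∀ k, MapsTo next^[k] S S := fun k => MapsTo.iterate hnextS k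
  obtain ⟨a, b, hab, heq⟩ :=
    hS.exists_lt_map_eq_of_forall_mem (f := fun k => next^[k] v) fun k => hmaps k hv
  set x := next^[a] v
  have hper : Function.IsPeriodicPt next (b - a) x := by
    change next^[b - a] (next^[a] v) = next^[a] v
    rw [← Function.iterate_add_apply, Nat.sub_add_cancel hab.le]
    exact heq.symm
  refine ⟨_, hper.minimalPeriod_pos (by omega), fun k => next^[k] x,
    fun k _ => hmaps k (hmaps a hv), Function.iterate_injOn_Iio_minimalPeriod, fun i _ => ?_⟩
  beta_reduce
  rw [Function.iterate_mod_minimalPeriod_eq, Function.iterate_succ_apply']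
  exact hnext _ (hmaps i (hmaps a hv))

/-- A chord `f i → f j` of a cycle closes the shorter cycle `f j, f (j + 1), …, f i`. -/
theorem IsCycleIn.exists_shorter_of_chord {L : ℕ} {f : ℕ → β} (hf : IsCycleIn r S L f)
    {i j : ℕ} (hi : i < L) (hj : j < L) (hr : r (f i) (f j)) (hji : j ≠ (i + 1) % L) :
    ∃ L' < L, 0 < L' ∧ ∃ g, IsCycleIn r S L' g := by
  have hL : 0 < L := by omega
  set d := (i + L - j) % L
  have hd : (j + d) % L = i := by
    rw [Nat.add_mod_mod, show j + (i + L - j) = i + L by omega, Nat.add_mod_right,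
      Nat.mod_eq_of_lt hi]
  have hdL : d + 1 < L := by
    have : d + 1 ≠ L := fun h => hji <| by
      rw [← hd, Nat.mod_add_mod, add_assoc, h, Nat.add_mod_right, Nat.mod_eq_of_lt hj]
    have : d < L := Nat.mod_lt _ hL
    omega
  refine ⟨d + 1, hdL, d.succ_pos, fun m => f ((j + m) % L),
    fun m _ => hf.1 (Nat.mod_lt _ hL), fun a ha b hb hab => ?_, fun m hm => ?_⟩
  · have := hf.2.1 (Nat.mod_lt _ hL) (Nat.mod_lt _ hL) hab
    exact Nat.ModEq.eq_of_lt_of_lt (Nat.ModEq.add_left_cancel' j this)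
      (by simp only [mem_Iio] at ha; omega) (by simp only [mem_Iio] at hb; omega)
  · beta_reduce
    rcases (Nat.lt_succ_iff.1 hm).lt_or_eq with hm | rfl
    · rw [Nat.mod_eq_of_lt (by omega : m + 1 < d + 1), ← add_assoc, ← Nat.mod_add_mod (j + m)]
      exact hf.2.2 _ (Nat.mod_lt _ hL)
    · rwa [Nat.mod_self, add_zero, Nat.mod_eq_of_lt hj, hd]

theorem exists_chordless_cycle (hS : S.Finite) (hne : S.Nonempty)
    (hout : ∀ v ∈ S, ∃ w ∈ S, r v w) :
    ∃ L, 0 < L ∧ ∃ f : ℕ → β, MapsTo f (Iio L) S ∧ InjOn f (Iio L) ∧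
      ∀ i < L, ∀ j < L, (r (f i) (f j) ↔ j = (i + 1) % L) := by
  classical
  have hex := exists_isCycleIn hS hne hout
  obtain ⟨hpos, f, hf⟩ := Nat.find_spec hex
  refine ⟨_, hpos, f, hf.1, hf.2.1, fun i hi j hj => ⟨fun hr => ?_, ?_⟩⟩
  · by_contra hji
    obtain ⟨L', hlt, hL', g, hg⟩ := hf.exists_shorter_of_chord hi hj hr hji
    exact Nat.find_min hex hlt ⟨hL', g, hg⟩
  · rintro rfl
    exact hf.2.2 i hi

end Cycle

theorem even_of_isCycleIn_arc {M N : Matroid α} {I S : Set α} {L : ℕ} {f : ℕ → α}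
    (hf : IsCycleIn (Arc M N I) S L f) : Even L := by
  obtain rfl | hL := L.eq_zero_or_pos
  · exact ⟨0, rfl⟩
  have halt : ∀ k, f ((k + 1) % L) ∈ I ↔ f (k % L) ∉ I := fun k => by
    rw [← Nat.mod_add_mod]
    exact (hf.2.2 _ (Nat.mod_lt _ hL)).mem_iff_notMem
  have hpar : ∀ k, f (k % L) ∈ I ↔ (Even k ↔ f 0 ∈ I) := by
    intro k
    induction k with
    | zero => simp
    | succ k ih => rw [halt, ih, Nat.even_add_one]; tauto
  have := hpar L
  rw [Nat.mod_self] at this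
  tauto

section Switch

variable {M N : Matroid α} {I J O : Set α}

theorem SwitchCycle.finite (hO : SwitchCycle M N I O) : O.Finite := by
  obtain ⟨n, f, rfl, -⟩ := hO
  exact (finite_Iio _).image f

theorem SwitchCycle.indep_and_closure_eq (hIM : M.Indep I) (hIN : N.Indep I)
    (hO : SwitchCycle M N I O) :
    (M.Indep (I ∆ O) ∧ M.closure (I ∆ O) = M.closure I) ∧
      (N.Indep (I ∆ O) ∧ N.closure (I ∆ O) = N.closure I) := by
  obtain ⟨n, f, rfl, -, -, harc⟩ := hO
  set L := 2 * n + 2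
  set σ : ℕ → ℕ := fun i => (i + 1) % L
  have hσ : BijOn σ (Iio L) (Iio L) := bijOn_add_one_mod (by omega)
  have hcyc : ∀ i ∈ Iio L, Arc M N I (f i) (f (σ i)) := fun i hi =>
    (harc i hi _ (hσ.mapsTo hi)).2 rfl
  have halt : ∀ i ∈ Iio L, f (σ i) ∈ I ↔ f i ∉ I := fun i hi =>
    (hcyc i hi).mem_iff_notMem
  have hchord : ∀ i ∈ Iio L, ∀ j ∈ Iio L, Arc M N I (f i) (f (σ j)) ↔ i = j :=
    fun i hi j hj => (harc i hi _ (hσ.mapsTo hj)).trans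
      ⟨fun h => (hσ.injOn hj hi h).symm, fun h => h ▸ rfl⟩
  have hA : f '' {i ∈ Iio L | f i ∈ I} = f '' Iio L ∩ I := image_inter_preimage f _ I
  have hB : f '' {i ∈ Iio L | f i ∉ I} = f '' Iio L \ I := image_inter_preimage f _ Iᶜ
  have hσB : σ '' {i ∈ Iio L | f i ∉ I} = {i ∈ Iio L | f i ∈ I} := hσ.image_sep halt
  have hσA : σ '' {i ∈ Iio L | f i ∈ I} = {i ∈ Iio L | f i ∉ I} :=
    hσ.image_sep fun i hi => by rw [halt i hi, not_not]
  have hsymm : I \ (f '' Iio L ∩ I) ∪ (f '' Iio L \ I) = I ∆ (f '' Iio L) := by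
    rw [Set.symmDiff_def, sdiff_inter_self_eq_sdiff]
  constructor
  · have := hIM.diagonal_exchange (s := {i ∈ Iio L | f i ∉ I}) (x := f) (y := f ∘ σ)
      ((finite_Iio L).subset (sep_subset _ _)) (fun i hi => hi.2)
      (fun i hi => ((arc_iff_of_notMem hIM hi.2).1 (hcyc i hi.1)).2.1)
      (fun i hi => (halt i hi.1).2 hi.2)
      fun i hi j hj => by
        rw [← hchord i hi.1 j hj.1, arc_iff_of_notMem hIM hi.2, Function.comp_apply]
        have := (arc_iff_of_notMem hIM hi.2).1 (hcyc i hi.1)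
        exact ⟨fun h => ⟨(halt j hj.1).2 hj.2, this.2.1, h⟩, fun h => h.2.2⟩
    rwa [image_comp, hσB, hA, hB, hsymm] at this
  · have := hIN.diagonal_exchange (s := {i ∈ Iio L | f i ∈ I}) (x := f ∘ σ) (y := f)
      ((finite_Iio L).subset (sep_subset _ _)) (fun i hi h => (halt i hi.1).1 h hi.2)
      (fun i hi => ((arc_iff_of_mem hIN hi.2).1 (hcyc i hi.1)).2.2.1)
      (fun i hi => hi.2)
      fun i hi j hj => by
        rw [eq_comm, ← hchord j hj.1 i hi.1, arc_iff_of_mem hIN hj.2, Function.comp_apply]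
        have := (arc_iff_of_mem hIN hi.2).1 (hcyc i hi.1)
        exact ⟨fun h => ⟨this.1, this.2.1, this.2.2.1, h⟩, fun h => h.2.2.2⟩
    rwa [image_comp, hσA, hA, hB, hsymm] at this

theorem exists_switchCycle_subset_symmDiff (hIM : M.Indep I) (hIN : N.Indep I)
    (hJM : M.Indep J) (hJN : N.Indep J) (hM : M.closure I = M.closure J)
    (hN : N.closure I = N.closure J) (hfin : (I ∆ J).Finite) (hne : (I ∆ J).Nonempty) :
    ∃ O, SwitchCycle M N I O ∧ O ⊆ I ∆ J ∧ O.Nonempty := by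
  obtain ⟨L, hL, f, hmaps, hinj, hchord⟩ := exists_chordless_cycle hfin hne
    fun v hv => exists_arc_of_closure_eq hIM hIN hJM hJN hM hN hv
  obtain ⟨c, rfl⟩ := even_of_isCycleIn_arc
    ⟨hmaps, hinj, fun i hi => (hchord i hi _ (Nat.mod_lt _ hL)).2 rfl⟩
  have hc : c + c = 2 * (c - 1) + 2 := by omega
  have hE : I ∆ J ⊆ M.E :=
    symmDiff_subset_union.trans (union_subset hIM.subset_ground hJM.subset_ground)
  rw [hc] at hmaps hinj hchord
  exact ⟨_, ⟨c - 1, f, rfl, hmaps.image_subset.trans hE, hinj, hchord⟩, hmaps.image_subset,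
    ⟨f 0, 0, by simp, rfl⟩⟩

def SwitchStep (M N : Matroid α) (I I' : Set α) : Prop :=
  (I.Finite ∧ M.Indep I ∧ N.Indep I) ∧ ∃ O, SwitchCycle M N I O ∧ I' = I ∆ O

theorem reflTransGen_switchStep_of_closure_eq (hIfin : I.Finite) (hIM : M.Indep I)
    (hIN : N.Indep I) (hJfin : J.Finite) (hJM : M.Indep J) (hJN : N.Indep J)
    (hM : M.closure I = M.closure J) (hN : N.closure I = N.closure J) :
    ReflTransGen (SwitchStep M N) I J := by
  induction hk : (I ∆ J).ncard using Nat.strong_induction_on generalizing I with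
  | _ k ih =>
  obtain rfl | hIJ := eq_or_ne I J
  · exact .refl
  have hfin : (I ∆ J).Finite := (hIfin.union hJfin).subset symmDiff_subset_union
  obtain ⟨O, hO, hOIJ, hOne⟩ :=
    exists_switchCycle_subset_symmDiff hIM hIN hJM hJN hM hN hfin (symmDiff_nonempty.2 hIJ)
  obtain ⟨⟨hIM', hM'⟩, hIN', hN'⟩ := hO.indep_and_closure_eq hIM hIN
  have hlt : (I ∆ O ∆ J).ncard < k := by
    rw [symmDiff_right_comm, symmDiff_of_ge hOIJ, ← hk]
    exact ncard_lt_ncard (hOIJ.sdiff_ssubset_of_nonempty hOne) hfin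
  exact .head ⟨⟨hIfin, hIM, hIN⟩, O, hO, rfl⟩ <| ih _ hlt
    ((hIfin.union hO.finite).subset symmDiff_subset_union) hIM' hIN' (hM'.trans hM)
    (hN'.trans hN) rfl

theorem closure_eq_of_reflTransGen_switchStep (h : ReflTransGen (SwitchStep M N) I J) :
    M.closure I = M.closure J ∧ N.closure I = N.closure J := by
  induction h with
  | refl => exact ⟨rfl, rfl⟩
  | tail _ hstep ih =>
    obtain ⟨⟨-, hM, hN⟩, O, hO, rfl⟩ := hstep
    obtain ⟨⟨-, hM'⟩, -, hN'⟩ := hO.indep_and_closure_eq hM hN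
    exact ⟨ih.1.trans hM'.symm, ih.2.trans hN'.symm⟩

end Switch

theorem sim_iff_closure_eq {M N : Matroid α} {I J : Set α} (hIM : I ⊆ M.E) (hIN : I ⊆ N.E)
    (hJM : J ⊆ M.E) (hJN : J ⊆ N.E) :
    Sim M N I J ↔ M.closure I = M.closure J ∧ N.closure I = N.closure J := by
  simp only [Sim, Le, subset_inter_iff, ← closure_subset_closure_iff_subset_closure hIM,
    ← closure_subset_closure_iff_subset_closure hIN,
    ← closure_subset_closure_iff_subset_closure hJM,
    ← closure_subset_closure_iff_subset_closure hJN, subset_antisymm_iff]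
  tauto

theorem statement11_general (M N : Matroid α)
    (I J : Set α) (hIfin : I.Finite) (hIM : M.Indep I) (hIN : N.Indep I)
    (hJfin : J.Finite) (hJM : M.Indep J) (hJN : N.Indep J) :
    Sim M N I J ↔
      ∃ (n : ℕ) (g : ℕ → Set α), g 0 = I ∧ g n = J ∧
        (∀ i ≤ n, (g i).Finite ∧ M.Indep (g i) ∧ N.Indep (g i)) ∧
        ∀ i < n, ∃ O, SwitchCycle M N (g i) O ∧ g (i + 1) = g i ∆ O := by
  rw [sim_iff_closure_eq hIM.subset_ground hIN.subset_ground hJM.subset_ground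
    hJN.subset_ground]
  constructor
  · rintro ⟨hM, hN⟩
    obtain ⟨n, g, hg0, hgn, hstep⟩ := reflTransGen_iff_exists_seq.1
      (reflTransGen_switchStep_of_closure_eq hIfin hIM hIN hJfin hJM hJN hM hN)
    refine ⟨n, g, hg0, hgn, fun i hi => ?_, fun i hi => (hstep i hi).2⟩
    obtain hi | rfl := hi.lt_or_eq
    · exact (hstep i hi).1
    · exact hgn ▸ ⟨hJfin, hJM, hJN⟩
  · rintro ⟨n, g, hg0, hgn, hg, hstep⟩
    exact closure_eq_of_reflTransGen_switchStep <| reflTransGen_iff_exists_seq.2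
      ⟨n, g, hg0, hgn, fun i hi => ⟨hg i hi.le, hstep i hi⟩⟩

/-- `I ∼ J` iff `J` can be obtained from `I` by finitely many applications of
switching cycles, through finite common independent sets. -/
theorem statement11 (M N : Matroid α) [M.Finitary] [N.Finitary] (hE : M.E = N.E)
    (I J : Set α) (hIfin : I.Finite) (hIM : M.Indep I) (hIN : N.Indep I)
    (hJfin : J.Finite) (hJM : M.Indep J) (hJN : N.Indep J) :
    Sim M N I J ↔
      ∃ (n : ℕ) (g : ℕ → Set α), g 0 = I ∧ g n = J ∧
        (∀ i ≤ n, (g i).Finite ∧ M.Indep (g i) ∧ N.Indep (g i)) ∧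
        ∀ i < n, ∃ O, SwitchCycle M N (g i) O ∧ g (i + 1) = g i ∆ O :=
  statement11_general M N I J hIfin hIM hIN hJfin hJM hJN

end AZ
end
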